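/- arXiv:2210.11678 — 8 statements merged into one kernel-verified Lean document; each statement's English description precedes it below -/
import Mathlib

section
/- For all complex numbers a and b with |a| ≤ 1 and |b| ≤ 1, the inequality (1/4)·((|a|² − 1)² − (|b|² − 1)²) ≤ (|b|² − 1)·Re( conj(b)·(a − b) ) + |a − b|² holds. -/
/-!
Write `x = ‖a‖²`, `y = ‖b‖²`, `r = ⟪b, a - b⟫` and `d = ‖a - b‖²`, so that `x = y + 2r + d`.
Then `¼((x - 1)² - (y - 1)²) = (y - 1) r + ½ d (y - 1) + ¼ (x - y)²`, and on the unit ball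
`y ≤ 1` while `|x - y| ≤ (‖a‖ + ‖b‖) ‖a - b‖ ≤ 2 ‖a - b‖`, so the last two terms are at most `d`.
The complex case is the real inner product space `ℂ`.
-/

open scoped InnerProductSpace

theorem abs_sq_norm_sub_sq_norm_le {E : Type*} [SeminormedAddCommGroup E] (a b : E) :
    |‖a‖ ^ 2 - ‖b‖ ^ 2| ≤ (‖a‖ + ‖b‖) * ‖a - b‖ := by
  rw [sq_sub_sq, abs_mul, abs_of_nonneg (by positivity)]
  exact mul_le_mul_of_nonneg_left (abs_norm_sub_norm_le a b) (by positivity)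

theorem sq_sq_norm_sub_sq_norm_le_of_norm_le_one {E : Type*} [SeminormedAddCommGroup E] {a b : E}
    (ha : ‖a‖ ≤ 1) (hb : ‖b‖ ≤ 1) : (‖a‖ ^ 2 - ‖b‖ ^ 2) ^ 2 ≤ 4 * ‖a - b‖ ^ 2 := by
  have h : |‖a‖ ^ 2 - ‖b‖ ^ 2| ≤ 2 * ‖a - b‖ :=
    (abs_sq_norm_sub_sq_norm_le a b).trans
      (mul_le_mul_of_nonneg_right (by linarith) (norm_nonneg _))
  calc (‖a‖ ^ 2 - ‖b‖ ^ 2) ^ 2 = |‖a‖ ^ 2 - ‖b‖ ^ 2| ^ 2 := (sq_abs _).symm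
    _ ≤ (2 * ‖a - b‖) ^ 2 := pow_le_pow_left₀ (abs_nonneg _) h 2
    _ = 4 * ‖a - b‖ ^ 2 := by ring

theorem real_inner_double_well_taylor_ineq {E : Type*} [NormedAddCommGroup E]
    [InnerProductSpace ℝ E] {a b : E} (ha : ‖a‖ ≤ 1) (hb : ‖b‖ ≤ 1) :
    (1 / 4 : ℝ) * ((‖a‖ ^ 2 - 1) ^ 2 - (‖b‖ ^ 2 - 1) ^ 2) ≤
      (‖b‖ ^ 2 - 1) * ⟪b, a - b⟫_ℝ + ‖a - b‖ ^ 2 := by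
  have hexpand : ‖a‖ ^ 2 = ‖b‖ ^ 2 + 2 * ⟪b, a - b⟫_ℝ + ‖a - b‖ ^ 2 := by
    rw [← norm_add_sq_real, add_sub_cancel]
  have hdiff := sq_sq_norm_sub_sq_norm_le_of_norm_le_one ha hb
  have hb2 : ‖b‖ ^ 2 ≤ 1 := pow_le_one₀ (norm_nonneg b) hb
  have hdamp : 0 ≤ ‖a - b‖ ^ 2 * (1 - ‖b‖ ^ 2) := mul_nonneg (sq_nonneg _) (by linarith)
  linear_combination (‖b‖ ^ 2 - 1) / 2 * hexpand + 1 / 4 * hdiff + 1 / 2 * hdamp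

theorem double_well_taylor_ineq (a b : ℂ) (ha : ‖a‖ ≤ 1) (hb : ‖b‖ ≤ 1) :
    (1 / 4 : ℝ) * ((‖a‖ ^ 2 - 1) ^ 2 - (‖b‖ ^ 2 - 1) ^ 2) ≤
      (‖b‖ ^ 2 - 1) * ((starRingEnd ℂ) b * (a - b)).re
        + ‖a - b‖ ^ 2 := by
  have h := real_inner_double_well_taylor_ineq ha hb
  rwa [Complex.inner, mul_comm (a - b)] at h
end

section
/- Let μ ≥ 1 be a real number and let a, b be complex numbers with |a| ≤ 1 and |b| ≤ 1. Then (1/4)·((|a|² − 1)² − (|b|² − 1)²) + (μ − 1)·|a − b|² ≤ Re( (μ·a − f_μ(b))·conj(a − b) ). -/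
/-- The stabilized Ginzburg–Landau nonlinearity `f_μ(x) = (1 − |x|²)·x + μ·x`. -/
noncomputable def fGL (μ : ℝ) (x : ℂ) : ℂ :=
  (1 - ((‖x‖ : ℝ) : ℂ) ^ 2) * x + (μ : ℂ) * x

/-!
The parameter `μ` cancels: `μ a - f_μ(b) = μ (a - b) + (|b|² - 1) b`, so the claim says that the
Bregman divergence of the double-well potential `F(x) = (|x|² - 1)² / 4` at `b` is at most
`|a - b|²`. Expanding `|a|² = |b|² + 2⟪a - b, b⟫ + |a - b|²`, that divergence equals
`(|b|² - 1) |a - b|² / 2 + (|a|² - |b|²)² / 4`; the first term is `≤ 0` on the unit ball and the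
second is at most `(|a| + |b|)² |a - b|² / 4 ≤ |a - b|²`.
-/

open RealInnerProductSpace

theorem sq_norm_sub_sq_norm_sq_le {E : Type*} [SeminormedAddCommGroup E] (a b : E) :
    (‖a‖ ^ 2 - ‖b‖ ^ 2) ^ 2 ≤ (‖a‖ + ‖b‖) ^ 2 * ‖a - b‖ ^ 2 := by
  have h : |‖a‖ - ‖b‖| ≤ ‖a - b‖ := abs_norm_sub_norm_le a b
  calc (‖a‖ ^ 2 - ‖b‖ ^ 2) ^ 2 = (‖a‖ + ‖b‖) ^ 2 * |‖a‖ - ‖b‖| ^ 2 := by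
        rw [sq_abs]; ring
    _ ≤ (‖a‖ + ‖b‖) ^ 2 * ‖a - b‖ ^ 2 := by gcongr

section DoubleWell

variable {E : Type*} [NormedAddCommGroup E] [InnerProductSpace ℝ E]

theorem double_well_bregman_eq (a b : E) :
    (1 / 4 : ℝ) * ((‖a‖ ^ 2 - 1) ^ 2 - (‖b‖ ^ 2 - 1) ^ 2) - (‖b‖ ^ 2 - 1) * ⟪a - b, b⟫ =
      (‖b‖ ^ 2 - 1) * ‖a - b‖ ^ 2 / 2 + (‖a‖ ^ 2 - ‖b‖ ^ 2) ^ 2 / 4 := by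
  have hsq : ‖a‖ ^ 2 = ‖a - b‖ ^ 2 + 2 * ⟪a - b, b⟫ + ‖b‖ ^ 2 := by
    simpa using norm_add_sq_real (a - b) b
  rw [hsq]
  ring

theorem double_well_bregman_le {a b : E} (ha : ‖a‖ ≤ 1) (hb : ‖b‖ ≤ 1) :
    (1 / 4 : ℝ) * ((‖a‖ ^ 2 - 1) ^ 2 - (‖b‖ ^ 2 - 1) ^ 2) - (‖b‖ ^ 2 - 1) * ⟪a - b, b⟫ ≤
      ‖a - b‖ ^ 2 := by
  have hsum : (‖a‖ + ‖b‖) ^ 2 ≤ 4 := by nlinarith [norm_nonneg a, norm_nonneg b]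
  have hdiff : (‖a‖ ^ 2 - ‖b‖ ^ 2) ^ 2 ≤ 4 * ‖a - b‖ ^ 2 :=
    (sq_norm_sub_sq_norm_sq_le a b).trans (by gcongr)
  have hb2 : ‖b‖ ^ 2 ≤ 1 := pow_le_one₀ (norm_nonneg b) hb
  rw [double_well_bregman_eq]
  nlinarith [sq_nonneg ‖a - b‖]

end DoubleWell

theorem fGL_eq (μ : ℝ) (x : ℂ) : fGL μ x = μ * x - ((‖x‖ ^ 2 - 1 : ℝ) : ℂ) * x := by
  simp only [fGL]
  push_cast
  ring

theorem re_mul_conj_sub_fGL (μ : ℝ) (a b : ℂ) :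
    (((μ : ℂ) * a - fGL μ b) * (starRingEnd ℂ) (a - b)).re =
      μ * ‖a - b‖ ^ 2 + (‖b‖ ^ 2 - 1) * ⟪a - b, b⟫ := by
  have hsplit : ((μ : ℂ) * a - fGL μ b) * (starRingEnd ℂ) (a - b) =
      μ * ((a - b) * (starRingEnd ℂ) (a - b)) +
        ((‖b‖ ^ 2 - 1 : ℝ) : ℂ) * (b * (starRingEnd ℂ) (a - b)) := by
    rw [fGL_eq]; ring
  rw [hsplit, Complex.mul_conj, Complex.inner, Complex.normSq_eq_norm_sq]
  simp only [Complex.add_re, Complex.re_ofReal_mul, Complex.ofReal_re]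

theorem stabilized_nonlinear_estimate_general (μ : ℝ) (a b : ℂ)
    (ha : ‖a‖ ≤ 1) (hb : ‖b‖ ≤ 1) :
    (1 / 4 : ℝ) * ((‖a‖ ^ 2 - 1) ^ 2 - (‖b‖ ^ 2 - 1) ^ 2)
        + (μ - 1) * ‖a - b‖ ^ 2 ≤
      (((μ : ℂ) * a - fGL μ b) * (starRingEnd ℂ) (a - b)).re := by
  rw [re_mul_conj_sub_fGL]
  linarith [double_well_bregman_le ha hb]

theorem stabilized_nonlinear_estimate (μ : ℝ) (hμ : 1 ≤ μ) (a b : ℂ)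
    (ha : ‖a‖ ≤ 1) (hb : ‖b‖ ≤ 1) :
    (1 / 4 : ℝ) * ((‖a‖ ^ 2 - 1) ^ 2 - (‖b‖ ^ 2 - 1) ^ 2)
        + (μ - 1) * ‖a - b‖ ^ 2 ≤
      (((μ : ℂ) * a - fGL μ b) * (starRingEnd ℂ) (a - b)).re :=
  stabilized_nonlinear_estimate_general μ a b ha hb
end

section
/- Let N ≥ 1 and let L ∈ ℂ^{N×N} be a complex matrix such that for every nonzero U ∈ ℂ^N and every index i with |U_i| = max_{1≤j≤N} |U_j|, one has Re( conj(U_i)·(LU)_i ) < 0. Then for every real λ > 0 and every nonzero U ∈ ℂ^N, ‖(λI − L)U‖_∞ > λ·‖U‖_∞; in particular, the matrix λI − L is invertible for every λ > 0. -/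
/-!
Pick a coordinate `i` where `|U_i|` attains `‖U‖_∞`. Then
`Re(conj U_i · ((λI - L)U)_i) = λ|U_i|² - Re(conj U_i · (LU)_i) > λ|U_i|²`, while the left side
is at most `|U_i| · |((λI - L)U)_i| ≤ |U_i| · ‖(λI - L)U‖_∞`; dividing by `|U_i| = ‖U‖_∞` gives the
estimate. For `λ > 0` it forces `(λI - L)U ≠ 0` whenever `U ≠ 0`, so `λI - L` is invertible.
-/

open ComplexConjugate

theorem Complex.mul_norm_lt_norm_ofReal_mul_sub_of_re_conj_mul_neg (lam : ℝ) {a c : ℂ}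
    (h : (conj a * c).re < 0) : lam * ‖a‖ < ‖(lam : ℂ) * a - c‖ := by
  have ha : 0 < ‖a‖ := norm_pos_iff.mpr fun ha ↦ by simp [ha] at h
  have hre : (conj a * ((lam : ℂ) * a - c)).re = lam * ‖a‖ ^ 2 - (conj a * c).re := by
    rw [mul_sub, mul_left_comm, Complex.conj_mul', Complex.sub_re, ← Complex.ofReal_pow,
      ← Complex.ofReal_mul, Complex.ofReal_re]
  have hle : (conj a * ((lam : ℂ) * a - c)).re ≤ ‖a‖ * ‖(lam : ℂ) * a - c‖ := by
    simpa only [norm_mul, Complex.norm_conj] using Complex.re_le_norm (conj a * ((lam : ℂ) * a - c))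
  refine lt_of_mul_lt_mul_left ?_ ha.le
  nlinarith

theorem exists_forall_norm_le_and_iSup_norm_eq {ι E : Type*} [Finite ι] [Nonempty ι]
    [NormedAddCommGroup E] (U : ι → E) : ∃ i, (∀ j, ‖U j‖ ≤ ‖U i‖) ∧ ⨆ j, ‖U j‖ = ‖U i‖ := by
  obtain ⟨i, hi⟩ := Finite.exists_max fun j ↦ ‖U j‖
  exact ⟨i, hi, le_antisymm (ciSup_le hi) (le_ciSup (Finite.bddAbove_range fun j ↦ ‖U j‖) i)⟩

namespace Matrix

variable {ι : Type*} [Fintype ι]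

def IsStrictlyDissipativeSup (L : Matrix ι ι ℂ) : Prop :=
  ∀ U : ι → ℂ, U ≠ 0 → ∀ i : ι, (∀ j : ι, ‖U j‖ ≤ ‖U i‖) → (conj (U i) * (L *ᵥ U) i).re < 0

variable [DecidableEq ι] {L : Matrix ι ι ℂ}

theorem IsStrictlyDissipativeSup.mul_iSup_norm_lt (hL : L.IsStrictlyDissipativeSup) (lam : ℝ)
    {U : ι → ℂ} (hU : U ≠ 0) :
    lam * ⨆ j, ‖U j‖ < ⨆ j, ‖(((lam : ℂ) • 1 - L) *ᵥ U) j‖ := by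
  have : Nonempty ι := (Function.ne_iff.mp hU).nonempty
  obtain ⟨i, hi, hsup⟩ := exists_forall_norm_le_and_iSup_norm_eq U
  have hcoord : (((lam : ℂ) • 1 - L) *ᵥ U) i = (lam : ℂ) * U i - (L *ᵥ U) i := by
    simp [sub_mulVec, smul_mulVec]
  calc lam * ⨆ j, ‖U j‖ = lam * ‖U i‖ := by rw [hsup]
    _ < ‖(((lam : ℂ) • 1 - L) *ᵥ U) i‖ := by
      rw [hcoord]
      exact Complex.mul_norm_lt_norm_ofReal_mul_sub_of_re_conj_mul_neg lam (hL U hU i hi)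
    _ ≤ ⨆ j, ‖(((lam : ℂ) • 1 - L) *ᵥ U) j‖ :=
      le_ciSup (Finite.bddAbove_range fun j ↦ ‖(((lam : ℂ) • 1 - L) *ᵥ U) j‖) i

theorem IsStrictlyDissipativeSup.isUnit_smul_one_sub (hL : L.IsStrictlyDissipativeSup) {lam : ℝ}
    (hlam : 0 ≤ lam) : IsUnit ((lam : ℂ) • 1 - L) := by
  rw [isUnit_iff_isUnit_det, isUnit_iff_ne_zero]
  intro hdet
  obtain ⟨v, hv, hker⟩ := exists_mulVec_eq_zero_iff.mpr hdet
  have hlt := hL.mul_iSup_norm_lt lam hv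
  have : Nonempty ι := (Function.ne_iff.mp hv).nonempty
  rw [hker] at hlt
  have hnonneg : 0 ≤ ⨆ j, ‖v j‖ := Real.iSup_nonneg fun j ↦ norm_nonneg (v j)
  simp only [Pi.zero_apply, norm_zero, ciSup_const] at hlt
  nlinarith

end Matrix

theorem resolvent_contraction_general (N : ℕ) (L : Matrix (Fin N) (Fin N) ℂ)
    (hL : ∀ U : Fin N → ℂ, U ≠ 0 → ∀ i : Fin N,
      (∀ j : Fin N, ‖U j‖ ≤ ‖U i‖) →
        ((starRingEnd ℂ) (U i) * L.mulVec U i).re < 0) :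
    (∀ lam : ℝ, 0 < lam → ∀ U : Fin N → ℂ, U ≠ 0 →
        lam * (⨆ j : Fin N, ‖U j‖) <
          ⨆ j : Fin N, ‖((lam : ℂ) • (1 : Matrix (Fin N) (Fin N) ℂ) - L).mulVec U j‖)
      ∧ ∀ lam : ℝ, 0 < lam →
        IsUnit ((lam : ℂ) • (1 : Matrix (Fin N) (Fin N) ℂ) - L) :=
  ⟨fun lam _ _ hU ↦ Matrix.IsStrictlyDissipativeSup.mul_iSup_norm_lt hL lam hU,
    fun _ hlam ↦ Matrix.IsStrictlyDissipativeSup.isUnit_smul_one_sub hL hlam.le⟩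

theorem resolvent_contraction (N : ℕ) (hN : 1 ≤ N) (L : Matrix (Fin N) (Fin N) ℂ)
    (hL : ∀ U : Fin N → ℂ, U ≠ 0 → ∀ i : Fin N,
      (∀ j : Fin N, ‖U j‖ ≤ ‖U i‖) →
        ((starRingEnd ℂ) (U i) * L.mulVec U i).re < 0) :
    (∀ lam : ℝ, 0 < lam → ∀ U : Fin N → ℂ, U ≠ 0 →
        lam * (⨆ j : Fin N, ‖U j‖) <
          ⨆ j : Fin N, ‖((lam : ℂ) • (1 : Matrix (Fin N) (Fin N) ℂ) - L).mulVec U j‖)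
      ∧ ∀ lam : ℝ, 0 < lam →
        IsUnit ((lam : ℂ) • (1 : Matrix (Fin N) (Fin N) ℂ) - L) :=
  resolvent_contraction_general N L hL
end

section
/- Let L ∈ ℂ^{N×N} be a Hermitian matrix whose diagonal entries are negative real numbers and which is strictly diagonally dominant, i.e. |L_{ii}| > Σ_{j≠i} |L_{ij}| for every i. Then for every nonzero U ∈ ℂ^N and every index i with |U_i| = max_{1≤j≤N} |U_j|, one has Re( conj(U_i)·(LU)_i ) < 0. -/
/-!
At an index `i` where `|U_i|` is maximal, split `conj(U_i) (LU)_i` into the diagonal term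
`L_ii |U_i|²` and the off-diagonal terms, each of real part at most `|L_ij| |U_i|²`. Hence
`Re(conj(U_i) (LU)_i) ≤ (Re L_ii + Σ_{j≠i} |L_ij|) |U_i|²`, and diagonal dominance with a negative
real diagonal makes the coefficient negative, while `U ≠ 0` makes `|U_i| > 0`.
-/

open Finset Matrix ComplexConjugate

section RCLike

variable {𝕜 : Type*} [RCLike 𝕜]

lemma RCLike.re_conj_mul_mul_le {a b c : 𝕜} (hc : ‖c‖ ≤ ‖a‖) :
    RCLike.re (conj a * (b * c)) ≤ ‖b‖ * ‖a‖ ^ 2 :=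
  calc RCLike.re (conj a * (b * c))
      ≤ ‖conj a * (b * c)‖ := RCLike.re_le_norm _
    _ = ‖a‖ * (‖b‖ * ‖c‖) := by simp only [norm_mul, RCLike.norm_conj]
    _ ≤ ‖a‖ * (‖b‖ * ‖a‖) := by gcongr
    _ = ‖b‖ * ‖a‖ ^ 2 := by ring

lemma Matrix.re_conj_mul_mulVec_le_of_norm_le {n : Type*} [Fintype n] [DecidableEq n]
    (L : Matrix n n 𝕜) (U : n → 𝕜) {i : n} (hmax : ∀ j, ‖U j‖ ≤ ‖U i‖) :
    RCLike.re (conj (U i) * (L *ᵥ U) i)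
      ≤ (RCLike.re (L i i) + ∑ j ∈ univ \ {i}, ‖L i j‖) * ‖U i‖ ^ 2 := by
  have hdiag : RCLike.re (conj (U i) * (L i i * U i)) = RCLike.re (L i i) * ‖U i‖ ^ 2 := by
    rw [mul_left_comm, RCLike.conj_mul, ← RCLike.ofReal_pow, RCLike.re_mul_ofReal]
  have hoff : ∑ j ∈ univ \ {i}, RCLike.re (conj (U i) * (L i j * U j))
      ≤ ∑ j ∈ univ \ {i}, ‖L i j‖ * ‖U i‖ ^ 2 :=
    sum_le_sum fun j _ => RCLike.re_conj_mul_mul_le (hmax j)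
  rw [mulVec, dotProduct, mul_sum, map_sum, sum_eq_sum_sdiff_singleton_add (mem_univ i), hdiag,
    add_mul, sum_mul]
  linarith

end RCLike

theorem hermitian_diag_dominant_dissipative_general (N : ℕ) (L : Matrix (Fin N) (Fin N) ℂ)
    (hdiag : ∀ i : Fin N, (L i i).re < 0 ∧ (L i i).im = 0)
    (hdom : ∀ i : Fin N, ∑ j ∈ Finset.univ \ {i}, ‖L i j‖ < ‖L i i‖) :
    ∀ U : Fin N → ℂ, U ≠ 0 → ∀ i : Fin N,
      (∀ j : Fin N, ‖U j‖ ≤ ‖U i‖) →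
        ((starRingEnd ℂ) (U i) * L.mulVec U i).re < 0 := by
  intro U hU i hmax
  obtain ⟨k, hk⟩ := Function.ne_iff.mp hU
  have hUi : 0 < ‖U i‖ := (norm_pos_iff.mpr hk).trans_le (hmax k)
  have hLii : ‖L i i‖ = -(L i i).re := by
    rw [← Complex.abs_re_eq_norm.mpr (hdiag i).2, abs_of_neg (hdiag i).1]
  calc ((starRingEnd ℂ) (U i) * L.mulVec U i).re
      ≤ ((L i i).re + ∑ j ∈ univ \ {i}, ‖L i j‖) * ‖U i‖ ^ 2 :=
        L.re_conj_mul_mulVec_le_of_norm_le U hmax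
    _ < 0 := mul_neg_of_neg_of_pos (by linarith [hdom i]) (by positivity)

theorem hermitian_diag_dominant_dissipative (N : ℕ) (L : Matrix (Fin N) (Fin N) ℂ)
    (hherm : L.IsHermitian)
    (hdiag : ∀ i : Fin N, (L i i).re < 0 ∧ (L i i).im = 0)
    (hdom : ∀ i : Fin N, ∑ j ∈ Finset.univ \ {i}, ‖L i j‖ < ‖L i i‖) :
    ∀ U : Fin N → ℂ, U ≠ 0 → ∀ i : Fin N,
      (∀ j : Fin N, ‖U j‖ ≤ ‖U i‖) →
        ((starRingEnd ℂ) (U i) * L.mulVec U i).re < 0 :=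
  hermitian_diag_dominant_dissipative_general N L hdiag hdom
end

section
/- Let a > 0, b, c, h > 0, θ be real numbers and let r_i, r_j be real numbers with 0 ≤ r_j ≤ r_i. Then a·r_i² − a·r_i·r_j·cos θ − b·h·r_i·r_j·sin θ + c·r_i²·h² ≥ (c − b²/(2a))·r_i²·h². -/
theorem mbp_pointwise_ineq (a b c h θ ri rj : ℝ)
    (ha : 0 < a) (hb : 0 < b) (hc : 0 < c) (hh : 0 < h)
    (hrj : 0 ≤ rj) (hrij : rj ≤ ri) :
    a * ri ^ 2 - a * ri * rj * Real.cos θ - b * h * ri * rj * Real.sin θ + c * ri ^ 2 * h ^ 2 ≥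
      (c - b ^ 2 / (2 * a)) * ri ^ 2 * h ^ 2 := by
  have pyth := Real.sin_sq_add_cos_sq θ
  have hd2 : 2 * a * (b ^ 2 / (2 * a)) * ri ^ 2 * h ^ 2 = b ^ 2 * ri ^ 2 * h ^ 2 := by
    field_simp
  have e1 : a ^ 2 * rj ^ 2 * (Real.sin θ ^ 2 + Real.cos θ ^ 2) = a ^ 2 * rj ^ 2 := by
    rw [pyth]; ring
  have e2 : b ^ 2 * h ^ 2 * rj ^ 2 * (Real.sin θ ^ 2 + Real.cos θ ^ 2)
      = b ^ 2 * h ^ 2 * rj ^ 2 := by rw [pyth]; ring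
  have hsq1 := sq_nonneg (a * ri - a * rj * Real.cos θ - b * h * rj * Real.sin θ)
  have hsq2 := mul_nonneg (sq_nonneg rj) (sq_nonneg (a * Real.sin θ - b * h * Real.cos θ))
  have hsq3 : 0 ≤ (a ^ 2 + b ^ 2 * h ^ 2) * (ri ^ 2 - rj ^ 2) := by
    apply mul_nonneg (by positivity)
    nlinarith
  rw [ge_iff_le, ← sub_nonneg]
  have key : 0 ≤ 2 * a * (a * ri ^ 2 - a * ri * rj * Real.cos θ - b * h * ri * rj * Real.sin θ +
      c * ri ^ 2 * h ^ 2 - (c - b ^ 2 / (2 * a)) * ri ^ 2 * h ^ 2) := by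
    nlinarith [hd2, e1, e2, hsq1, hsq2, hsq3]
  nlinarith [key, ha]
end

section
/- Let n ≥ 1, and let β > 0, μ > 0, T > 0 be real numbers. Let L ∈ ℂ^{n×n} be a matrix such that for every nonzero U ∈ ℂ^n and every index i with |U_i| = max_{1≤j≤n} |U_j|, Re( conj(U_i)·(LU)_i ) < 0. Let N : ℂ → ℂ satisfy |N(ξ)| ≤ μβ for every ξ with |ξ| ≤ β, and |N(ξ₁) − N(ξ₂)| ≤ 2μ·|ξ₁ − ξ₂| for all ξ₁, ξ₂ with |ξ₁| ≤ β and |ξ₂| ≤ β. Suppose u : ℝ → ℂ^n is differentiable on [0,T] and satisfies, for every t ∈ [0,T] and every component j, u_j'(t) = −μ·u_j(t) + (L u(t))_j + N(u_j(t)). If max_j |u_j(0)| ≤ β, then max_j |u_j(t)| ≤ β for every t ∈ [0,T]. -/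
/-!
The set of times at which `u` lies in the sup-norm ball of radius `β` is relatively closed in
`[0, T]`, so by real induction it suffices to show that the solution cannot leave the ball
immediately after a time at which it lies inside it. A component of modulus `< β` stays small by
continuity. A component `u_j` of modulus exactly `β` is a maximal component, so
`d/dt |u_j|² = 2 Re(conj u_j · u_j')` splits into `-2μβ²`, a strictly negative term from the
dissipativity of `L`, and at most `2μβ²` from `N`; hence `|u_j|` strictly decreases to the right.
-/

open Set Filter Topology
open scoped InnerProductSpace

theorem HasDerivAt.eventually_nhdsGT_lt_of_neg {f : ℝ → ℝ} {f' t : ℝ} (hf : HasDerivAt f f' t)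
    (hf' : f' < 0) : ∀ᶠ s in 𝓝[>] t, f s < f t := by
  have hslope : ∀ᶠ s in 𝓝[>] t, slope f t s < 0 :=
    ((hasDerivAt_iff_tendsto_slope.mp hf).eventually_lt_const hf').filter_mono
      (nhdsWithin_mono t fun _ hs => ne_of_gt hs)
  filter_upwards [hslope, self_mem_nhdsWithin] with s hs hts
  rw [slope_def_field, div_lt_iff₀ (sub_pos.mpr hts)] at hs
  linarith

section InnerProductSpace

variable {E : Type*} [NormedAddCommGroup E] [InnerProductSpace ℝ E]

theorem HasDerivAt.eventually_nhdsGT_norm_le {f : ℝ → E} {f' : E} {t β : ℝ}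
    (hf : HasDerivAt f f' t) (hle : ‖f t‖ ≤ β) (hinward : ‖f t‖ = β → ⟪f t, f'⟫_ℝ < 0) :
    ∀ᶠ s in 𝓝[>] t, ‖f s‖ ≤ β := by
  rcases hle.lt_or_eq with hlt | heq
  · exact ((hf.continuousAt.norm.eventually_lt continuousAt_const hlt).filter_mono
      nhdsWithin_le_nhds).mono fun _ hs => hs.le
  · have hdecr := hf.norm_sq.eventually_nhdsGT_lt_of_neg (by linarith [hinward heq])
    filter_upwards [hdecr] with s hs
    exact heq ▸ (lt_of_pow_lt_pow_left₀ 2 (norm_nonneg _) hs).le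

theorem real_inner_neg_smul_add_add_lt_zero {z a b : E} {μ : ℝ} (ha : ⟪z, a⟫_ℝ < 0)
    (hb : ‖b‖ ≤ μ * ‖z‖) : ⟪z, -μ • z + a + b⟫_ℝ < 0 := by
  have hzb : ⟪z, b⟫_ℝ ≤ μ * ‖z‖ ^ 2 :=
    calc ⟪z, b⟫_ℝ ≤ ‖z‖ * ‖b‖ := real_inner_le_norm z b
      _ ≤ ‖z‖ * (μ * ‖z‖) := mul_le_mul_of_nonneg_left hb (norm_nonneg z)
      _ = μ * ‖z‖ ^ 2 := by ring
  rw [inner_add_right, inner_add_right, real_inner_smul_right, real_inner_self_eq_norm_sq]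
  linarith

end InnerProductSpace

theorem complex_maximum_bound_principle_general (n : ℕ)
    (β μ T : ℝ) (hβ : 0 < β)
    (L : Matrix (Fin n) (Fin n) ℂ)
    (hL : ∀ U : Fin n → ℂ, U ≠ 0 → ∀ i : Fin n,
      (∀ j : Fin n, ‖U j‖ ≤ ‖U i‖) →
        ((starRingEnd ℂ) (U i) * L.mulVec U i).re < 0)
    (N : ℂ → ℂ)
    (hNbound : ∀ ξ : ℂ, ‖ξ‖ ≤ β → ‖N ξ‖ ≤ μ * β)
    (u : ℝ → Fin n → ℂ)
    (hode : ∀ t ∈ Set.Icc (0 : ℝ) T, ∀ j : Fin n,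
      HasDerivAt (fun s => u s j) (-(μ : ℂ) * u t j + L.mulVec (u t) j + N (u t j)) t)
    (hinit : ∀ j : Fin n, ‖u 0 j‖ ≤ β) :
    ∀ t ∈ Set.Icc (0 : ℝ) T, ∀ j : Fin n, ‖u t j‖ ≤ β := by
  set K : Set (Fin n → ℂ) := {v | ∀ j, ‖v j‖ ≤ β}
  have hK : IsClosed K := by
    simp only [K, ofPred_forall]
    exact isClosed_iInter fun j => isClosed_le (continuous_apply j).norm continuous_const
  have hcont : ContinuousOn u (Icc 0 T) :=
    continuousOn_pi.2 fun j t ht => (hode t ht j).continuousAt.continuousWithinAt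
  have hclosed : IsClosed (u ⁻¹' K ∩ Icc 0 T) := by
    rw [inter_comm]; exact hcont.preimage_isClosed_of_isClosed isClosed_Icc hK
  refine fun t ht => IsClosed.Icc_subset_of_forall_mem_nhdsWithin hclosed hinit ?_ ht
  rintro t ⟨hKt, htT⟩
  refine eventually_all.2 fun j =>
    (hode t (Ico_subset_Icc_self htT) j).eventually_nhdsGT_norm_le (hKt j) fun hmax => ?_
  have hne : u t ≠ 0 := fun h => hβ.ne (by simpa [h] using hmax)
  have hLj : ⟪u t j, L.mulVec (u t) j⟫_ℝ < 0 := by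
    rw [Complex.inner, mul_comm]; exact hL (u t) hne j fun k => hmax ▸ hKt k
  rw [← Complex.ofReal_neg, ← Complex.real_smul]
  exact real_inner_neg_smul_add_add_lt_zero hLj (hmax ▸ hNbound _ (hKt j))

theorem complex_maximum_bound_principle (n : ℕ) (hn : 1 ≤ n)
    (β μ T : ℝ) (hβ : 0 < β) (hμ : 0 < μ) (hT : 0 < T)
    (L : Matrix (Fin n) (Fin n) ℂ)
    (hL : ∀ U : Fin n → ℂ, U ≠ 0 → ∀ i : Fin n,
      (∀ j : Fin n, ‖U j‖ ≤ ‖U i‖) →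
        ((starRingEnd ℂ) (U i) * L.mulVec U i).re < 0)
    (N : ℂ → ℂ)
    (hNbound : ∀ ξ : ℂ, ‖ξ‖ ≤ β → ‖N ξ‖ ≤ μ * β)
    (hNlip : ∀ ξ₁ ξ₂ : ℂ, ‖ξ₁‖ ≤ β → ‖ξ₂‖ ≤ β →
      ‖N ξ₁ - N ξ₂‖ ≤ 2 * μ * ‖ξ₁ - ξ₂‖)
    (u : ℝ → Fin n → ℂ)
    (hode : ∀ t ∈ Set.Icc (0 : ℝ) T, ∀ j : Fin n,
      HasDerivAt (fun s => u s j) (-(μ : ℂ) * u t j + L.mulVec (u t) j + N (u t j)) t)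
    (hinit : ∀ j : Fin n, ‖u 0 j‖ ≤ β) :
    ∀ t ∈ Set.Icc (0 : ℝ) T, ∀ j : Fin n, ‖u t j‖ ≤ β :=
  complex_maximum_bound_principle_general n β μ T hβ L hL N hNbound u hode hinit
end

section
/- Let L ∈ ℂ^{N×N} be a Hermitian negative definite matrix and let τ > 0 be real. Then I − exp(τL) is invertible, and the matrix G = τ·( L·(I − exp(τL))⁻¹ − L ) is Hermitian and negative definite, i.e. x*Gx < 0 for every nonzero x ∈ ℂ^N. -/
/-
Conjugation A ↦ U A U* by the eigenvector unitary of L is a *-algebra automorphism that also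
commutes with exp and with the matrix inverse. Since L = U diag(μ) U* with all μᵢ < 0, this gives
G = U diag(g(τ μᵢ)) U*, where g(s) = s/(1 - eˢ) - s = s eˢ/(1 - eˢ) < 0 for s < 0. So -G is
unitarily congruent to a positive diagonal matrix, hence positive definite.
-/

open scoped Matrix ComplexOrder
open Matrix Unitary

noncomputable def etdG (s : ℝ) : ℝ := s / (1 - Real.exp s) - s

lemma one_sub_exp_ne_zero {s : ℝ} (hs : s ≠ 0) : 1 - Real.exp s ≠ 0 :=
  sub_ne_zero.mpr (Ne.symm <| (Real.exp_eq_one_iff s).not.mpr hs)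

lemma etdG_eq_mul_exp_div {s : ℝ} (hs : s ≠ 0) :
    etdG s = s * Real.exp s / (1 - Real.exp s) := by
  have := one_sub_exp_ne_zero hs
  rw [etdG]
  field_simp
  ring

lemma etdG_neg {s : ℝ} (hs : s < 0) : etdG s < 0 := by
  rw [etdG_eq_mul_exp_div hs.ne]
  exact div_neg_of_neg_of_pos (mul_neg_of_neg_of_pos hs (Real.exp_pos s))
    (sub_pos.mpr (Real.exp_lt_one_iff.mpr hs))

namespace Matrix

variable {n 𝕜 : Type*} [Fintype n] [DecidableEq n] [RCLike 𝕜]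

lemma IsHermitian.eigenvalues_neg {A : Matrix n n 𝕜} (hA : A.IsHermitian)
    (h : ∀ x : n → 𝕜, x ≠ 0 → RCLike.re (star x ⬝ᵥ A *ᵥ x) < 0) (i : n) :
    hA.eigenvalues i < 0 := by
  rw [hA.eigenvalues_eq]
  exact h _ fun h0 ↦ hA.eigenvectorBasis.orthonormal.ne_zero i (by ext j; exact congrFun h0 j)

lemma nonsing_inv_coe_unitary (U : unitaryGroup n 𝕜) :
    (U : Matrix n n 𝕜)⁻¹ = star (U : Matrix n n 𝕜) :=
  inv_eq_right_inv (coe_mul_star_self U)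

lemma exp_conjStarAlgAut (U : unitaryGroup n 𝕜) (A : Matrix n n 𝕜) :
    NormedSpace.exp (conjStarAlgAut 𝕜 _ U A) = conjStarAlgAut 𝕜 _ U (NormedSpace.exp A) := by
  simpa only [conjStarAlgAut_apply, nonsing_inv_coe_unitary] using exp_conj _ A isUnit_coe

lemma inv_conjStarAlgAut (U : unitaryGroup n 𝕜) (A : Matrix n n 𝕜) :
    (conjStarAlgAut 𝕜 _ U A)⁻¹ = conjStarAlgAut 𝕜 _ U A⁻¹ := by
  simp only [conjStarAlgAut_apply, mul_inv_rev, ← coe_star, nonsing_inv_coe_unitary, star_star,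
    mul_assoc]

lemma posDef_conjStarAlgAut_iff (U : unitaryGroup n 𝕜) (A : Matrix n n 𝕜) :
    (conjStarAlgAut 𝕜 _ U A).PosDef ↔ A.PosDef := by
  rw [conjStarAlgAut_apply, isUnit_coe.posDef_star_right_conjugate_iff]

lemma inv_diagonal_of_ne_zero {K : Type*} [Field K] {d : n → K} (hd : ∀ i, d i ≠ 0) :
    (diagonal d)⁻¹ = diagonal d⁻¹ := by
  refine inv_eq_right_inv ?_
  rw [diagonal_mul_diagonal, ← diagonal_one]
  exact congrArg diagonal (funext fun i ↦ mul_inv_cancel₀ (hd i))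

lemma one_sub_exp_diagonal_ofReal (s : n → ℝ) :
    1 - NormedSpace.exp (diagonal fun i ↦ (s i : ℂ)) =
      diagonal fun i ↦ ((1 - Real.exp (s i) : ℝ) : ℂ) := by
  rw [exp_diagonal, ← diagonal_one, diagonal_sub]
  congr 1
  ext i
  simp [← Complex.exp_eq_exp_ℂ, Complex.ofReal_exp]

lemma isUnit_one_sub_exp_diagonal_ofReal {s : n → ℝ} (hs : ∀ i, s i ≠ 0) :
    IsUnit (1 - NormedSpace.exp (diagonal fun i ↦ (s i : ℂ))) := by
  rw [one_sub_exp_diagonal_ofReal, isUnit_diagonal, Pi.isUnit_iff]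
  exact fun i ↦ (Complex.ofReal_ne_zero.mpr (one_sub_exp_ne_zero (hs i))).isUnit

lemma diagonal_mul_inv_one_sub_exp_sub_self {s : n → ℝ} (hs : ∀ i, s i ≠ 0) :
    (diagonal fun i ↦ (s i : ℂ)) * (1 - NormedSpace.exp (diagonal fun i ↦ (s i : ℂ)))⁻¹ -
        diagonal (fun i ↦ (s i : ℂ)) = diagonal fun i ↦ (etdG (s i) : ℂ) := by
  rw [one_sub_exp_diagonal_ofReal, inv_diagonal_of_ne_zero, diagonal_mul_diagonal, diagonal_sub]
  · simp [etdG, div_eq_mul_inv]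
  · exact fun i ↦ Complex.ofReal_ne_zero.mpr (one_sub_exp_ne_zero (hs i))

end Matrix

theorem etd_g_negDef (N : ℕ) (L : Matrix (Fin N) (Fin N) ℂ)
    (hherm : L.IsHermitian)
    (hneg : ∀ x : Fin N → ℂ, x ≠ 0 → (star x ⬝ᵥ L.mulVec x).re < 0)
    (τ : ℝ) (hτ : 0 < τ) :
    IsUnit ((1 : Matrix (Fin N) (Fin N) ℂ) - NormedSpace.exp ((τ : ℂ) • L)) ∧
      ((τ : ℂ) • (L * ((1 : Matrix (Fin N) (Fin N) ℂ) - NormedSpace.exp ((τ : ℂ) • L))⁻¹ - L)).IsHermitian ∧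
      ∀ x : Fin N → ℂ, x ≠ 0 →
        (star x ⬝ᵥ ((τ : ℂ) • (L * ((1 : Matrix (Fin N) (Fin N) ℂ) - NormedSpace.exp ((τ : ℂ) • L))⁻¹ - L)).mulVec x).re < 0 := by
  set φ := conjStarAlgAut ℂ _ hherm.eigenvectorUnitary
  set s : Fin N → ℝ := fun i ↦ τ * hherm.eigenvalues i
  have hs : ∀ i, s i < 0 := fun i ↦ mul_neg_of_pos_of_neg hτ (hherm.eigenvalues_neg hneg i)
  have hτL : (τ : ℂ) • L = φ (diagonal fun i ↦ (s i : ℂ)) := by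
    conv_lhs => rw [hherm.spectral_theorem]
    rw [← map_smul, ← diagonal_smul]
    congr 2
    ext i
    simp [s]
  have hunit : IsUnit (1 - NormedSpace.exp ((τ : ℂ) • L)) := by
    rw [hτL, exp_conjStarAlgAut, ← map_one φ, ← map_sub]
    exact (isUnit_one_sub_exp_diagonal_ofReal fun i ↦ (hs i).ne).map φ
  have hG : (τ : ℂ) • (L * (1 - NormedSpace.exp ((τ : ℂ) • L))⁻¹ - L) =
      φ (diagonal fun i ↦ (etdG (s i) : ℂ)) := by
    rw [smul_sub, ← smul_mul_assoc, hτL, exp_conjStarAlgAut, ← map_one φ, ← map_sub,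
      inv_conjStarAlgAut, ← map_mul, ← map_sub,
      diagonal_mul_inv_one_sub_exp_sub_self fun i ↦ (hs i).ne]
  have hpos : (-((τ : ℂ) • (L * (1 - NormedSpace.exp ((τ : ℂ) • L))⁻¹ - L))).PosDef := by
    rw [hG, ← map_neg, posDef_conjStarAlgAut_iff, diagonal_neg, posDef_diagonal_iff]
    intro i
    rw [neg_pos]
    exact_mod_cast etdG_neg (hs i)
  refine ⟨hunit, by simpa using hpos.isHermitian.neg, fun x hx ↦ ?_⟩
  simpa [neg_mulVec] using hpos.re_dotProduct_pos hx
end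

section
/- Let L ∈ ℂ^{N×N} be a complex matrix such that for every nonzero U ∈ ℂ^N and every index i with |U_i| = max_{1≤j≤N} |U_j|, one has Re( conj(U_i)·(LU)_i ) ≤ 0. Then for every t ≥ 0 and every U ∈ ℂ^N, ‖exp(tL)·U‖_∞ ≤ ‖U‖_∞. -/
/-!
Backward Euler steps do not increase the maximum norm: if `‖V‖ = |V i|`, then the dissipativity
condition at `i` makes `|(V - hLV)_i| ≥ |V_i|` for `h ≥ 0`, so `‖V‖ ≤ ‖(1 - hL)V‖`.
With `x = (t/n)L`, iterating this gives
`‖exp(tL)U‖ ≤ ‖(1 - x)ⁿ exp(x)ⁿ U‖ ≤ ‖(1 - x) exp x‖ⁿ ‖U‖`, and since `s ↦ (1 - sL) exp(sL)`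
has derivative `0` at `s = 0`, the factor `‖(1 - x) exp x‖ⁿ ≤ exp (n‖(1 - x) exp x - 1‖)`
tends to `1` as `n → ∞`.
-/

open NormedSpace Filter Topology Asymptotics

section BanachAlgebra

variable {𝕂 𝔸 : Type*} [RCLike 𝕂] [NormedRing 𝔸] [NormedAlgebra 𝕂 𝔸] [CompleteSpace 𝔸]

theorem hasDerivAt_one_sub_smul_mul_exp_smul_zero (a : 𝔸) :
    HasDerivAt (fun s : 𝕂 => (1 - s • a) * exp (s • a)) 0 0 := by
  have h := ((hasDerivAt_id (0 : 𝕂)).smul_const a).const_sub 1 |>.fun_mul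
    (hasDerivAt_exp_smul_const a (0 : 𝕂))
  simpa using h

theorem tendsto_nat_mul_norm_one_sub_smul_mul_exp_smul_sub_one (a : 𝔸) (t : 𝕂) :
    Tendsto (fun n : ℕ => n * ‖(1 - (t / n) • a) * exp ((t / n) • a) - 1‖) atTop (𝓝 0) := by
  have hlo := (hasDerivAt_iff_isLittleO_nhds_zero.mp
    (hasDerivAt_one_sub_smul_mul_exp_smul_zero (𝕂 := 𝕂) a)).comp_tendsto
    (tendsto_const_div_atTop_nhds_zero_nat t)
  have hsmall : (fun n : ℕ => ‖(1 - (t / n) • a) * exp ((t / n) • a) - 1‖) =o[atTop]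
      (fun n : ℕ => (n : ℝ)⁻¹) := by
    refine (hlo.norm_left.trans_isBigO ?_).congr_left ?_
    · exact isBigO_iff.2 ⟨‖t‖, .of_forall fun n => by simp [div_eq_mul_inv]⟩
    · simp
  simpa [div_inv_eq_mul, mul_comm] using hsmall.tendsto_div_nhds_zero

end BanachAlgebra

theorem Complex.norm_le_norm_sub_of_re_conj_mul_nonpos {z w : ℂ}
    (h : ((starRingEnd ℂ) z * w).re ≤ 0) : ‖z‖ ≤ ‖z - w‖ := by
  have hsq : ‖z‖ ^ 2 ≤ ‖z - w‖ ^ 2 := by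
    rw [← Complex.normSq_eq_norm_sq, ← Complex.normSq_eq_norm_sq, Complex.normSq_sub,
      ← Complex.conj_re, map_mul, Complex.conj_conj, mul_comm]
    nlinarith [Complex.normSq_nonneg w]
  exact (sq_le_sq₀ (norm_nonneg _) (norm_nonneg _)).mp hsq

theorem norm_pow_le_exp_nat_mul_norm_sub_one {R : Type*} [SeminormedRing R] [NormOneClass R]
    (b : R) (n : ℕ) : ‖b ^ n‖ ≤ Real.exp (n * ‖b - 1‖) := by
  have hb : ‖b‖ ≤ ‖b - 1‖ + 1 := by
    simpa using norm_add_le (b - 1) 1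
  calc ‖b ^ n‖ ≤ ‖b‖ ^ n := norm_pow_le b n
    _ ≤ Real.exp ‖b - 1‖ ^ n := by
      gcongr
      exact hb.trans (Real.add_one_le_exp _)
    _ = Real.exp (n * ‖b - 1‖) := (Real.exp_nat_mul _ n).symm

namespace Matrix

variable {ι : Type*} [Fintype ι]

def SupNormDissipative (L : Matrix ι ι ℂ) : Prop :=
  ∀ U : ι → ℂ, U ≠ 0 → ∀ i : ι, (∀ j : ι, ‖U j‖ ≤ ‖U i‖) →
    ((starRingEnd ℂ) (U i) * L.mulVec U i).re ≤ 0

variable [DecidableEq ι]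

theorem SupNormDissipative.norm_le_norm_one_sub_smul_mulVec {L : Matrix ι ι ℂ}
    (hL : L.SupNormDissipative) {h : ℝ} (hh : 0 ≤ h) (V : ι → ℂ) :
    ‖V‖ ≤ ‖(1 - (h : ℂ) • L) *ᵥ V‖ := by
  rcases eq_or_ne V 0 with rfl | hV
  · simp
  have : Nonempty ι := not_isEmpty_iff.mp fun _ => hV (Subsingleton.elim _ _)
  obtain ⟨i, hi⟩ := Finite.exists_max fun j => ‖V j‖
  have hre : ((starRingEnd ℂ) (V i) * ((h : ℂ) * (L *ᵥ V) i)).re ≤ 0 := by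
    rw [mul_left_comm, Complex.re_ofReal_mul]
    exact mul_nonpos_of_nonneg_of_nonpos hh (hL V hV i hi)
  calc ‖V‖ = ‖V i‖ := le_antisymm (pi_norm_le_iff_of_nonneg (norm_nonneg _) |>.mpr hi)
        (norm_le_pi_norm V i)
    _ ≤ ‖V i - (h : ℂ) * (L *ᵥ V) i‖ := Complex.norm_le_norm_sub_of_re_conj_mul_nonpos hre
    _ = ‖((1 - (h : ℂ) • L) *ᵥ V) i‖ := by
      rw [sub_mulVec, one_mulVec, smul_mulVec]; rfl
    _ ≤ ‖(1 - (h : ℂ) • L) *ᵥ V‖ := norm_le_pi_norm _ i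

theorem norm_le_norm_pow_mulVec {α : Type*} [SeminormedRing α] {M : Matrix ι ι α}
    (hM : ∀ V, ‖V‖ ≤ ‖M *ᵥ V‖) (n : ℕ) (V : ι → α) : ‖V‖ ≤ ‖(M ^ n) *ᵥ V‖ := by
  induction n with
  | zero => simp
  | succ n ih => simpa [pow_succ', ← mulVec_mulVec] using ih.trans (hM _)

section LinftyOpNorm

attribute [local instance] Matrix.linftyOpNormedRing Matrix.linftyOpNormedAlgebra

theorem SupNormDissipative.norm_exp_smul_mulVec_le {L : Matrix ι ι ℂ}
    (hL : L.SupNormDissipative) {t : ℝ} (ht : 0 ≤ t) (U : ι → ℂ) :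
    ‖exp ((t : ℂ) • L) *ᵥ U‖ ≤ ‖U‖ := by
  cases isEmpty_or_nonempty ι
  · simp [Subsingleton.elim U 0]
  set δ : ℕ → ℝ := fun n => ‖(1 - ((t : ℂ) / n) • L) * exp (((t : ℂ) / n) • L) - 1‖
  have hbound : ∀ n : ℕ, 1 ≤ n → ‖exp ((t : ℂ) • L) *ᵥ U‖ ≤ Real.exp (n * δ n) * ‖U‖ := by
    intro n hn
    set x := ((t : ℂ) / n) • L
    have hexp : exp ((t : ℂ) • L) = exp x ^ n := by
      rw [← exp_nsmul, ← Nat.cast_smul_eq_nsmul ℂ, smul_smul,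
        mul_div_cancel₀ _ (Nat.cast_ne_zero.mpr (by omega))]
    have hcomm : Commute (1 - x) (exp x) :=
      ((Commute.one_left x).sub_left (Commute.refl x)).exp_right
    have hstep : ∀ V, ‖V‖ ≤ ‖(1 - x) *ᵥ V‖ := by
      have hx : x = ((t / n : ℝ) : ℂ) • L := by push_cast; rfl
      exact hx ▸ hL.norm_le_norm_one_sub_smul_mulVec (by positivity)
    calc ‖exp ((t : ℂ) • L) *ᵥ U‖ ≤ ‖(1 - x) ^ n *ᵥ (exp ((t : ℂ) • L) *ᵥ U)‖ :=
          norm_le_norm_pow_mulVec hstep n _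
      _ = ‖((1 - x) * exp x) ^ n *ᵥ U‖ := by rw [mulVec_mulVec, hexp, hcomm.mul_pow]
      _ ≤ ‖((1 - x) * exp x) ^ n‖ * ‖U‖ := linfty_opNorm_mulVec _ _
      _ ≤ Real.exp (n * δ n) * ‖U‖ := by
          gcongr
          exact norm_pow_le_exp_nat_mul_norm_sub_one _ n
  have hlim : Tendsto (fun n : ℕ => Real.exp (n * δ n) * ‖U‖) atTop
      (𝓝 (Real.exp 0 * ‖U‖)) :=
    ((Real.continuous_exp.tendsto 0).comp
      (tendsto_nat_mul_norm_one_sub_smul_mul_exp_smul_sub_one L (t : ℂ))).mul_const ‖U‖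
  simpa using ge_of_tendsto hlim (eventually_atTop.2 ⟨1, hbound⟩)

end LinftyOpNorm

end Matrix

theorem exp_contraction_sup_norm (N : ℕ) (L : Matrix (Fin N) (Fin N) ℂ)
    (hL : ∀ U : Fin N → ℂ, U ≠ 0 → ∀ i : Fin N,
      (∀ j : Fin N, ‖U j‖ ≤ ‖U i‖) →
        ((starRingEnd ℂ) (U i) * L.mulVec U i).re ≤ 0) :
    ∀ t : ℝ, 0 ≤ t → ∀ U : Fin N → ℂ,
      (⨆ i : Fin N, ‖(NormedSpace.exp ((t : ℂ) • L)).mulVec U i‖) ≤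
        ⨆ i : Fin N, ‖U i‖ := by
  intro t ht U
  have hsup (V : Fin N → ℂ) : ⨆ i, ‖V i‖ = ‖V‖ := by
    rw [← PiLp.norm_toLp, PiLp.norm_eq_ciSup]
  rw [hsup, hsup]
  exact Matrix.SupNormDissipative.norm_exp_smul_mulVec_le hL ht U
end
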